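/- arXiv:2110.11280 — 4 statements merged into one kernel-verified Lean document; each statement's English description precedes it below -/
import Mathlib

section
/- Uniform probability-ratio bound from bounded KL: let ν be a probability measure on a finite state space S with ν(s) > 0 for all s, and let π̃, π be policies (for each s, probability distributions over a finite action set of size k). If K_ν(π̃, π) := ∑_s ν(s) ∑_a π̃(s,a) ln(π̃(s,a)/π(s,a)) ≤ c, then for every (s,a) with π̃(s,a) > 0, π̃(s,a)/π(s,a) ≤ exp( c/(ν(s) π̃(s,a)) + (ln k)/π̃(s,a) ). -/
open Finset

/-- Gibbs' inequality: the cross-entropy style sum is nonnegative. -/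
lemma gibbs_aux {A : Type*} [Fintype A] (p q : A → ℝ)
    (hp : ∀ a, 0 ≤ p a) (hq : ∀ a, 0 ≤ q a)
    (hps : ∑ a, p a = 1) (hqs : ∑ a, q a ≤ 1)
    (hpos : ∀ a, 0 < p a → 0 < q a) :
    0 ≤ ∑ a, p a * Real.log (p a / q a) := by
  have key : ∀ a ∈ Finset.univ, p a - q a ≤ p a * Real.log (p a / q a) := by
    intro a _
    rcases eq_or_lt_of_le (hp a) with h | h
    · rw [← h]; simpa using hq a
    · have hqa := hpos a h
      have hlog : Real.log (q a / p a) ≤ q a / p a - 1 :=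
        Real.log_le_sub_one_of_pos (by positivity)
      have hrw : Real.log (p a / q a) = - Real.log (q a / p a) := by
        rw [← Real.log_inv]; congr 1; field_simp
      have hmul : p a * Real.log (q a / p a) ≤ p a * (q a / p a - 1) :=
        mul_le_mul_of_nonneg_left hlog h.le
      have heq : p a * (q a / p a - 1) = q a - p a := by field_simp
      rw [hrw]; linarith [hmul, heq ▸ hmul]
  calc (0:ℝ) ≤ ∑ a, (p a - q a) := by
        rw [Finset.sum_sub_distrib, hps]; linarith
    _ ≤ _ := Finset.sum_le_sum key

/-- Uniform probability-ratio bound from bounded KL: if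
`K_ν(π̃, π) = ∑_s ν(s) ∑_a π̃(s,a) ln(π̃(s,a)/π(s,a)) ≤ c` for a fully supported
probability measure `ν` on a finite state space, then for every `(s,a)` with
`π̃(s,a) > 0`, `π̃(s,a)/π(s,a) ≤ exp(c/(ν(s) π̃(s,a)) + (ln k)/π̃(s,a))` where
`k` is the number of actions. -/
theorem stmt9 {S A : Type*} [Fintype S] [Fintype A]
    (ν : S → ℝ) (hν : ∀ s, 0 < ν s) (hνsum : ∑ s, ν s = 1)
    (pit pi' : S → A → ℝ)
    (hpit : ∀ s, (∀ a, 0 ≤ pit s a) ∧ ∑ a, pit s a = 1)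
    (hpi : ∀ s, (∀ a, 0 ≤ pi' s a) ∧ ∑ a, pi' s a = 1)
    (hpos : ∀ s a, 0 < pit s a → 0 < pi' s a)
    (c : ℝ) (hc : 0 < c)
    (hKL : ∑ s, ν s * ∑ a, pit s a * Real.log (pit s a / pi' s a) ≤ c)
    (s : S) (a : A) (ha : 0 < pit s a) :
    pit s a / pi' s a
      ≤ Real.exp (c / (ν s * pit s a) + Real.log (Fintype.card A) / pit s a) := by
  classical
  have hk : 0 < Fintype.card A := Fintype.card_pos_iff.mpr ⟨a⟩
  set k : ℝ := (Fintype.card A : ℝ) with hkdef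
  have hkR : (1:ℝ) ≤ k := Nat.one_le_cast.mpr hk
  have hpia := hpos s a ha
  -- per-state KL nonneg
  have hKLs : ∀ s', 0 ≤ ∑ a', pit s' a' * Real.log (pit s' a' / pi' s' a') :=
    fun s' => gibbs_aux _ _ (hpit s').1 (hpi s').1 (hpit s').2
      (le_of_eq (hpi s').2) (hpos s')
  have h1 : ν s * ∑ a', pit s a' * Real.log (pit s a' / pi' s a') ≤ c := by
    refine le_trans ?_ hKL
    exact Finset.single_le_sum
      (fun s' _ => mul_nonneg (hν s').le (hKLs s')) (Finset.mem_univ s)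
  -- entropy bound: ∑ p log p ≥ - log k
  have hent : -Real.log k ≤ ∑ a', pit s a' * Real.log (pit s a') := by
    have hg := gibbs_aux (pit s) (fun _ => k⁻¹) (hpit s).1
      (fun _ => by positivity) (hpit s).2
      (by
        rw [Finset.sum_const, Finset.card_univ, nsmul_eq_mul, ← hkdef]
        rw [mul_inv_cancel₀ (by positivity)])
      (fun a' _ => by positivity)
    have hsplit : ∑ a', pit s a' * Real.log (pit s a' / k⁻¹)
        = ∑ a', (pit s a' * Real.log (pit s a') + pit s a' * Real.log k) := by
      refine Finset.sum_congr rfl (fun a' _ => ?_)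
      rcases eq_or_lt_of_le ((hpit s).1 a') with h | h
      · rw [← h]; ring
      · rw [Real.log_div h.ne' (by positivity), Real.log_inv]; ring
    rw [hsplit, Finset.sum_add_distrib, ← Finset.sum_mul, (hpit s).2, one_mul] at hg
    linarith
  -- each term pit * log(pit/pi) ≥ pit * log pit
  have hterm : ∀ a', pit s a' * Real.log (pit s a')
      ≤ pit s a' * Real.log (pit s a' / pi' s a') := by
    intro a'
    rcases eq_or_lt_of_le ((hpit s).1 a') with h | h
    · rw [← h]; simp
    · have hpi' := hpos s a' h
      have hle1 : pi' s a' ≤ 1 := by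
        rw [← (hpi s).2]
        exact Finset.single_le_sum (fun b _ => (hpi s).1 b) (Finset.mem_univ a')
      have : Real.log (pi' s a') ≤ 0 := Real.log_nonpos hpi'.le hle1
      rw [Real.log_div h.ne' hpi'.ne']
      nlinarith
  -- pit s a ≤ 1, so pit s a * log(pit s a) ≤ 0
  have hle1a : pit s a ≤ 1 := by
    rw [← (hpit s).2]
    exact Finset.single_le_sum (fun b _ => (hpit s).1 b) (Finset.mem_univ a)
  have hloga : pit s a * Real.log (pit s a) ≤ 0 :=
    mul_nonpos_of_nonneg_of_nonpos ha.le (Real.log_nonpos ha.le hle1a)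
  -- lower bound the KL sum by the single term minus log k
  have hsum : pit s a * Real.log (pit s a / pi' s a) - Real.log k
      ≤ ∑ a', pit s a' * Real.log (pit s a' / pi' s a') := by
    have h2 : ∑ a' ∈ Finset.univ.erase a, pit s a' * Real.log (pit s a')
        ≤ ∑ a' ∈ Finset.univ.erase a, pit s a' * Real.log (pit s a' / pi' s a') :=
      Finset.sum_le_sum (fun a' _ => hterm a')
    have h3 : ∑ a', pit s a' * Real.log (pit s a')
        = pit s a * Real.log (pit s a)
          + ∑ a' ∈ Finset.univ.erase a, pit s a' * Real.log (pit s a') :=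
      (Finset.add_sum_erase _ _ (Finset.mem_univ a)).symm
    have h4 : ∑ a', pit s a' * Real.log (pit s a' / pi' s a')
        = pit s a * Real.log (pit s a / pi' s a)
          + ∑ a' ∈ Finset.univ.erase a, pit s a' * Real.log (pit s a' / pi' s a') :=
      (Finset.add_sum_erase _ _ (Finset.mem_univ a)).symm
    rw [h4]
    have : -Real.log k - pit s a * Real.log (pit s a)
        ≤ ∑ a' ∈ Finset.univ.erase a, pit s a' * Real.log (pit s a') := by
      linarith [hent, h3.symm.le]
    linarith
  -- combine: pit s a * log(pit/pi) ≤ c / ν s + log k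
  have hKLle : ∑ a', pit s a' * Real.log (pit s a' / pi' s a') ≤ c / ν s := by
    rw [le_div_iff₀ (hν s)]
    linarith [h1]
  have hmain : pit s a * Real.log (pit s a / pi' s a) ≤ c / ν s + Real.log k := by
    linarith
  have hlogle : Real.log (pit s a / pi' s a)
      ≤ c / (ν s * pit s a) + Real.log k / pit s a := by
    rw [← le_div_iff₀' ha] at hmain
    calc Real.log (pit s a / pi' s a) ≤ (c / ν s + Real.log k) / pit s a := hmain
      _ = c / (ν s * pit s a) + Real.log k / pit s a := by
          rw [add_div, div_div]
  calc pit s a / pi' s a = Real.exp (Real.log (pit s a / pi' s a)) :=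
        (Real.exp_log (by positivity)).symm
    _ ≤ _ := Real.exp_le_exp.mpr hlogle
end

section
/- Value of the fixed point under the linear MDP assumption: if E[r | (s,a)] = x_{sa}ᵀ y and E[s' | (s,a)] = M x_{sa}, then for the TD fixed point ū of the policy π and any state-action pair (s,a) in the support of the stationary distribution, x_{sa}ᵀ ū = x_{sa}ᵀ ∑_{t≥0} (γ Mᵀ X_πᵀ)^t y = Q_π(s,a), the discounted Q-function of π. -/
open Matrix


section Aux

variable {n m : Type*} [Fintype n] [Fintype m]

lemma aux_sum_dot {ι : Type*} (s : Finset ι) (f : ι → n → ℝ) (w : n → ℝ) :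
    (∑ i ∈ s, f i) ⬝ᵥ w = ∑ i ∈ s, f i ⬝ᵥ w := by
  simp [dotProduct, Finset.sum_mul, Finset.sum_apply]; exact Finset.sum_comm

lemma aux_dot_sum {ι : Type*} (s : Finset ι) (f : ι → n → ℝ) (w : n → ℝ) :
    w ⬝ᵥ (∑ i ∈ s, f i) = ∑ i ∈ s, w ⬝ᵥ f i := by
  simp [dotProduct, Finset.mul_sum, Finset.sum_apply]; exact Finset.sum_comm

lemma aux_mulVec_sum {ι : Type*} (s : Finset ι) (N : Matrix m n ℝ) (f : ι → n → ℝ) :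
    N *ᵥ (∑ i ∈ s, f i) = ∑ i ∈ s, N *ᵥ f i :=
  map_sum (Matrix.mulVecLin N) f s

lemma aux_summat_mulVec {ι : Type*} (s : Finset ι) (f : ι → Matrix m n ℝ) (w : n → ℝ) :
    (∑ i ∈ s, f i) *ᵥ w = ∑ i ∈ s, f i *ᵥ w := by
  funext j
  simp [mulVec, dotProduct, Finset.sum_apply, Finset.sum_mul, Matrix.sum_apply]
  exact Finset.sum_comm

lemma aux_dshift (N : Matrix n n ℝ) (u w : n → ℝ) :
    u ⬝ᵥ (N *ᵥ w) = (Nᵀ *ᵥ u) ⬝ᵥ w := by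
  rw [Matrix.dotProduct_mulVec, Matrix.mulVec_transpose]

lemma aux_dotCLM (v : n → ℝ) : ∃ L : (n → ℝ) →L[ℝ] ℝ, ∀ w, L w = v ⬝ᵥ w :=
  ⟨LinearMap.toContinuousLinearMap
    { toFun := fun w => v ⬝ᵥ w
      map_add' := fun a b => dotProduct_add v a b
      map_smul' := fun c a => dotProduct_smul c v a }, fun _ => rfl⟩

lemma aux_mulVecCLM (N : Matrix m n ℝ) : ∃ L : (n → ℝ) →L[ℝ] (m → ℝ), ∀ w, L w = N *ᵥ w :=
  ⟨LinearMap.toContinuousLinearMap (Matrix.mulVecLin N), fun _ => rfl⟩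

lemma aux_vecMulVec_mulVec (u v w : n → ℝ) :
    vecMulVec u v *ᵥ w = (v ⬝ᵥ w) • u := by
  funext i
  simp [vecMulVec_apply, mulVec, dotProduct, Finset.sum_mul, Finset.mul_sum]
  apply Finset.sum_congr rfl; intro j _; ring

lemma aux_vecMulVec_mul (u v : n → ℝ) (N : Matrix n n ℝ) :
    vecMulVec u (Nᵀ *ᵥ v) = vecMulVec v v * N → True := fun _ => trivial

lemma aux_swap4 {S : Type*} [Fintype S] {k : ℕ} (f : S → Fin k → S → Fin k → ℝ) :
    ∑ s0, ∑ a0, ∑ s', ∑ b, f s0 a0 s' b = ∑ s', ∑ b, ∑ s0, ∑ a0, f s0 a0 s' b := by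
  calc ∑ s0, ∑ a0, ∑ s', ∑ b, f s0 a0 s' b
      = ∑ s0, ∑ s', ∑ a0, ∑ b, f s0 a0 s' b :=
        Finset.sum_congr rfl fun s0 _ => Finset.sum_comm
    _ = ∑ s', ∑ s0, ∑ a0, ∑ b, f s0 a0 s' b := Finset.sum_comm
    _ = ∑ s', ∑ s0, ∑ b, ∑ a0, f s0 a0 s' b :=
        Finset.sum_congr rfl fun s' _ => Finset.sum_congr rfl fun s0 _ => Finset.sum_comm
    _ = ∑ s', ∑ b, ∑ s0, ∑ a0, f s0 a0 s' b :=
        Finset.sum_congr rfl fun s' _ => Finset.sum_comm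

end Aux

/-- Value of the TD fixed point under the linear MDP assumption: with state features
`feat s ∈ ℝ^d`, actions the standard basis vectors of `ℝ^k`, and state-action
features `x_{sa} = vec(s aᵀ)`, suppose the linear MDP assumption holds:
`E[r|(s,a)] = x_{sa}ᵀ y` and `E[s'|(s,a)] = M x_{sa}`.  Let `Q_π` be the
(Bellman) Q-function of the policy `π`, `X_π` the linear map sending a state
feature to the expected state-action feature under `π`, `ρ` the stationary state
distribution, and `ū` the TD fixed point
`ū = ∑_{t≥0} (γ A⁺ B)^t A⁺ br` built from the stationary second-moment matrices.
Then for every `(s,a)` in the support of the stationary distribution,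
`x_{sa}ᵀ ū = x_{sa}ᵀ ∑_{t≥0} (γ Mᵀ X_πᵀ)^t y = Q_π(s,a)`. -/
theorem stmt14 {d k : ℕ} {S : Type*} [Fintype S]
    (feat : S → Fin d → ℝ)
    (x : S → Fin k → (Fin d × Fin k) → ℝ)
    (hx : ∀ s a i, x s a i = feat s i.1 * (if i.2 = a then 1 else 0))
    (γ : ℝ) (hγ0 : 0 < γ) (hγ1 : γ < 1)
    (P : S → Fin k → S → ℝ)
    (hP : ∀ s a, (∀ s', 0 ≤ P s a s') ∧ ∑ s', P s a s' = 1)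
    (π : S → Fin k → ℝ)
    (hπ : ∀ s, (∀ a, 0 ≤ π s a) ∧ ∑ a, π s a = 1)
    (y : (Fin d × Fin k) → ℝ) (M : Matrix (Fin d) (Fin d × Fin k) ℝ)
    (hM : ∀ s a, ∑ s', P s a s' • feat s' = M *ᵥ x s a)
    (R : S → Fin k → ℝ) (hR : ∀ s a, R s a = x s a ⬝ᵥ y)
    (Q : S → Fin k → ℝ)
    (hQ : ∀ s a, Q s a = R s a + γ * ∑ s', P s a s' * ∑ b, π s' b * Q s' b)
    (Xπ : Matrix (Fin d × Fin k) (Fin d) ℝ)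
    (hXπ : ∀ s, Xπ *ᵥ feat s = ∑ b, π s b • x s b)
    (ρ : S → ℝ) (hρ : ∀ s, 0 ≤ ρ s) (hρsum : ∑ s, ρ s = 1)
    (hρstat : ∀ s', ∑ s, ρ s * ∑ a, π s a * P s a s' = ρ s')
    (A B : Matrix (Fin d × Fin k) (Fin d × Fin k) ℝ) (br : (Fin d × Fin k) → ℝ)
    (hA : A = ∑ s, ∑ a, (ρ s * π s a) • vecMulVec (x s a) (x s a))
    (hB : B = ∑ s, ∑ a, (ρ s * π s a) •
      vecMulVec (x s a) (∑ s', P s a s' • ∑ b, π s' b • x s' b))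
    (hbr : br = ∑ s, ∑ a, (ρ s * π s a) • (R s a • x s a))
    (Ap : Matrix (Fin d × Fin k) (Fin d × Fin k) ℝ)
    (hMP1 : A * Ap * A = A) (hMP2 : Ap * A * Ap = Ap)
    (hMP3 : (A * Ap)ᵀ = A * Ap) (hMP4 : (Ap * A)ᵀ = Ap * A)
    (hsum1 : Summable fun t : ℕ => ((γ • (Ap * B)) ^ t) *ᵥ (Ap *ᵥ br))
    (hsum2 : Summable fun t : ℕ => ((γ • (Mᵀ * Xπᵀ)) ^ t) *ᵥ y)
    (ub : (Fin d × Fin k) → ℝ)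
    (hub : ub = ∑' t : ℕ, ((γ • (Ap * B)) ^ t) *ᵥ (Ap *ᵥ br))
    (s : S) (a : Fin k) (hsupp : 0 < ρ s * π s a) :
    x s a ⬝ᵥ ub = x s a ⬝ᵥ (∑' t : ℕ, ((γ • (Mᵀ * Xπᵀ)) ^ t) *ᵥ y) ∧
    x s a ⬝ᵥ ub = Q s a := by
  classical
  set C : Matrix (Fin d × Fin k) (Fin d × Fin k) ℝ := Mᵀ * Xπᵀ with hCdef
  -- action of Cᵀ on state-action features
  have hCx : ∀ s0 a0, Cᵀ *ᵥ x s0 a0 = ∑ s', P s0 a0 s' • ∑ b, π s' b • x s' b := by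
    intro s0 a0
    have hCt : Cᵀ = Xπ * M := by
      rw [hCdef, Matrix.transpose_mul, Matrix.transpose_transpose, Matrix.transpose_transpose]
    rw [hCt, ← Matrix.mulVec_mulVec, ← hM s0 a0, aux_mulVec_sum]
    exact Finset.sum_congr rfl fun s' _ => by rw [Matrix.mulVec_smul, hXπ]
  -- B = A * C and br = A *ᵥ y
  have hBAC : B = A * C := by
    rw [hB, hA, Finset.sum_mul]
    refine Finset.sum_congr rfl fun s0 _ => ?_
    rw [Finset.sum_mul]
    refine Finset.sum_congr rfl fun a0 _ => ?_
    rw [smul_mul_assoc, ← hCx s0 a0]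
    congr 1
    ext i j
    simp only [vecMulVec_apply, Matrix.mul_apply, mulVec, dotProduct,
      Matrix.transpose_apply, Finset.mul_sum]
    exact Finset.sum_congr rfl fun l _ => by ring
  have hbrAy : br = A *ᵥ y := by
    rw [hbr, hA, aux_summat_mulVec]
    refine Finset.sum_congr rfl fun s0 _ => ?_
    rw [aux_summat_mulVec]
    refine Finset.sum_congr rfl fun a0 _ => ?_
    rw [smul_mulVec, aux_vecMulVec_mulVec, hR]
  -- kernel lemma
  have hker : ∀ v : (Fin d × Fin k) → ℝ, A *ᵥ v = 0 →
      ∀ s0 b0, 0 < ρ s0 * π s0 b0 → x s0 b0 ⬝ᵥ v = 0 := by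
    intro v hv s0 b0 hsb
    have hAv : A *ᵥ v = ∑ s1, ∑ b1, (ρ s1 * π s1 b1) • ((x s1 b1 ⬝ᵥ v) • x s1 b1) := by
      rw [hA, aux_summat_mulVec]
      refine Finset.sum_congr rfl fun s1 _ => ?_
      rw [aux_summat_mulVec]
      exact Finset.sum_congr rfl fun b1 _ => by
        rw [smul_mulVec, aux_vecMulVec_mulVec]
    have h0 : v ⬝ᵥ (A *ᵥ v) = 0 := by rw [hv, dotProduct_zero]
    have hexp : v ⬝ᵥ (A *ᵥ v) = ∑ s1, ∑ b1, (ρ s1 * π s1 b1) * (x s1 b1 ⬝ᵥ v) ^ 2 := by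
      rw [hAv, aux_dot_sum]
      refine Finset.sum_congr rfl fun s1 _ => ?_
      rw [aux_dot_sum]
      refine Finset.sum_congr rfl fun b1 _ => ?_
      rw [dotProduct_smul, dotProduct_smul, smul_eq_mul, smul_eq_mul]
      have : v ⬝ᵥ x s1 b1 = x s1 b1 ⬝ᵥ v := dotProduct_comm _ _
      rw [this]; ring
    have hnn : ∀ s1 ∈ Finset.univ, ∀ b1 ∈ Finset.univ,
        0 ≤ (ρ s1 * π s1 b1) * (x s1 b1 ⬝ᵥ v) ^ 2 := fun s1 _ b1 _ =>
      mul_nonneg (mul_nonneg (hρ s1) ((hπ s1).1 b1)) (sq_nonneg _)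
    have hz : ∀ s1 ∈ Finset.univ, ∀ b1 ∈ Finset.univ,
        (ρ s1 * π s1 b1) * (x s1 b1 ⬝ᵥ v) ^ 2 = 0 := by
      have houter := (Finset.sum_eq_zero_iff_of_nonneg
        (fun s1 _ => Finset.sum_nonneg (fun b1 _ => hnn s1 (Finset.mem_univ s1) b1 (Finset.mem_univ b1)))).1
        (by rw [← hexp, h0])
      intro s1 hs1 b1 hb1
      exact (Finset.sum_eq_zero_iff_of_nonneg
        (fun b1 _ => hnn s1 hs1 b1 (Finset.mem_univ b1))).1 (houter s1 hs1) b1 hb1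
    have := hz s0 (Finset.mem_univ s0) b0 (Finset.mem_univ b0)
    have hsq : (x s0 b0 ⬝ᵥ v) ^ 2 = 0 := by
      rcases mul_eq_zero.1 this with h | h
      · exact absurd h (ne_of_gt hsb)
      · exact h
    exact pow_eq_zero_iff (by norm_num) |>.1 hsq
  -- projection fixes supported features
  have hfix : ∀ s0 b0, 0 < ρ s0 * π s0 b0 → (Ap * A) *ᵥ x s0 b0 = x s0 b0 := by
    intro s0 b0 hsb
    have hproj : (Ap * A) * (Ap * A) = Ap * A := by
      rw [← Matrix.mul_assoc, hMP2]
    have hAw : A *ᵥ (x s0 b0 - (Ap * A) *ᵥ x s0 b0) = 0 := by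
      rw [Matrix.mulVec_sub, Matrix.mulVec_mulVec, ← Matrix.mul_assoc, hMP1, sub_self]
    have hApAw : (Ap * A) *ᵥ (x s0 b0 - (Ap * A) *ᵥ x s0 b0) = 0 := by
      rw [Matrix.mulVec_sub, Matrix.mulVec_mulVec, hproj, sub_self]
    have huw : x s0 b0 ⬝ᵥ (x s0 b0 - (Ap * A) *ᵥ x s0 b0) = 0 := hker _ hAw s0 b0 hsb
    have hww : (x s0 b0 - (Ap * A) *ᵥ x s0 b0) ⬝ᵥ (x s0 b0 - (Ap * A) *ᵥ x s0 b0) = 0 := by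
      rw [sub_dotProduct]
      have h2 : ((Ap * A) *ᵥ x s0 b0) ⬝ᵥ (x s0 b0 - (Ap * A) *ᵥ x s0 b0) = 0 := by
        rw [dotProduct_comm, aux_dshift, hMP4, hApAw, zero_dotProduct]
      rw [huw, h2, sub_self]
    have hwz := dotProduct_self_eq_zero.1 hww
    exact (sub_eq_zero.1 hwz).symm
  -- projection fixes good combinations
  have hfixsum : ∀ c : S → Fin k → ℝ, (∀ s0 b0, c s0 b0 ≠ 0 → 0 < ρ s0 * π s0 b0) →
      (Ap * A) *ᵥ (∑ s0, ∑ b0, c s0 b0 • x s0 b0) = ∑ s0, ∑ b0, c s0 b0 • x s0 b0 := by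
    intro c hc
    rw [aux_mulVec_sum]
    refine Finset.sum_congr rfl fun s0 _ => ?_
    rw [aux_mulVec_sum]
    refine Finset.sum_congr rfl fun b0 _ => ?_
    by_cases h : c s0 b0 = 0
    · rw [h, zero_smul, Matrix.mulVec_zero]
    · rw [Matrix.mulVec_smul, hfix s0 b0 (hc s0 b0 h)]
  -- Cᵀ maps good combinations to good combinations
  have hCgood : ∀ c : S → Fin k → ℝ, (∀ s0 b0, c s0 b0 ≠ 0 → 0 < ρ s0 * π s0 b0) →
      ∃ c' : S → Fin k → ℝ, (∀ s0 b0, c' s0 b0 ≠ 0 → 0 < ρ s0 * π s0 b0) ∧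
        Cᵀ *ᵥ (∑ s0, ∑ b0, c s0 b0 • x s0 b0) = ∑ s0, ∑ b0, c' s0 b0 • x s0 b0 := by
    intro c hc
    refine ⟨fun s' b => (∑ s0, ∑ a0, c s0 a0 * P s0 a0 s') * π s' b, ?_, ?_⟩
    · intro s' b h
      have hπb : π s' b ≠ 0 := fun h0 => h (by simp [h0])
      have hsum_ne : (∑ s0, ∑ a0, c s0 a0 * P s0 a0 s') ≠ 0 := fun h0 => h (by simp [h0])
      obtain ⟨s0, _, h0⟩ := Finset.exists_ne_zero_of_sum_ne_zero hsum_ne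
      obtain ⟨a0, _, h1⟩ := Finset.exists_ne_zero_of_sum_ne_zero h0
      have hc0 : c s0 a0 ≠ 0 := left_ne_zero_of_mul h1
      have hP0 : P s0 a0 s' ≠ 0 := right_ne_zero_of_mul h1
      have hgood := hc s0 a0 hc0
      have hρ0 : 0 < ρ s0 := by
        rcases mul_pos_iff.1 hgood with ⟨h1', _⟩ | ⟨h1', _⟩
        · exact h1'
        · exact absurd h1' (not_lt.2 (hρ s0))
      have hπ0 : 0 < π s0 a0 := by
        rcases mul_pos_iff.1 hgood with ⟨_, h2'⟩ | ⟨_, h2'⟩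
        · exact h2'
        · exact absurd h2' (not_lt.2 ((hπ s0).1 a0))
      have hPpos : 0 < P s0 a0 s' := lt_of_le_of_ne ((hP s0 a0).1 s') (Ne.symm hP0)
      have hρs' : 0 < ρ s' := by
        rw [← hρstat s']
        calc (0:ℝ) < ρ s0 * (π s0 a0 * P s0 a0 s') := mul_pos hρ0 (mul_pos hπ0 hPpos)
          _ ≤ ρ s0 * ∑ a1, π s0 a1 * P s0 a1 s' := by
              refine mul_le_mul_of_nonneg_left ?_ (hρ s0)
              exact Finset.single_le_sum
                (fun a1 _ => mul_nonneg ((hπ s0).1 a1) ((hP s0 a1).1 s')) (Finset.mem_univ a0)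
          _ ≤ ∑ s1, ρ s1 * ∑ a1, π s1 a1 * P s1 a1 s' :=
              Finset.single_le_sum (fun s1 _ => mul_nonneg (hρ s1)
                (Finset.sum_nonneg fun a1 _ => mul_nonneg ((hπ s1).1 a1) ((hP s1 a1).1 s')))
                (Finset.mem_univ s0)
      exact mul_pos hρs' (lt_of_le_of_ne ((hπ s').1 b) (Ne.symm hπb))
    · rw [aux_mulVec_sum]
      calc ∑ s0, Cᵀ *ᵥ (∑ b0, c s0 b0 • x s0 b0)
          = ∑ s0, ∑ a0, c s0 a0 • (∑ s', P s0 a0 s' • ∑ b, π s' b • x s' b) := by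
            refine Finset.sum_congr rfl fun s0 _ => ?_
            rw [aux_mulVec_sum]
            exact Finset.sum_congr rfl fun a0 _ => by rw [Matrix.mulVec_smul, hCx]
        _ = ∑ s', ∑ b, ((∑ s0, ∑ a0, c s0 a0 * P s0 a0 s') * π s' b) • x s' b := by
            funext i
            simp only [Finset.sum_apply, Pi.smul_apply, smul_eq_mul, Finset.mul_sum,
              Finset.sum_mul]
            rw [aux_swap4]
            refine Finset.sum_congr rfl fun s' _ => Finset.sum_congr rfl fun b _ =>
              Finset.sum_congr rfl fun s0 _ => Finset.sum_congr rfl fun a0 _ => by ring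
  -- the key termwise identity
  have hkey : ∀ (t : ℕ) (c : S → Fin k → ℝ), (∀ s0 b0, c s0 b0 ≠ 0 → 0 < ρ s0 * π s0 b0) →
      (∑ s0, ∑ b0, c s0 b0 • x s0 b0) ⬝ᵥ ((γ • (Ap * B)) ^ t *ᵥ (Ap *ᵥ br)) =
      (∑ s0, ∑ b0, c s0 b0 • x s0 b0) ⬝ᵥ ((γ • C) ^ t *ᵥ y) := by
    intro t
    induction t with
    | zero =>
      intro c hc
      rw [pow_zero, pow_zero, Matrix.one_mulVec, Matrix.one_mulVec, hbrAy,
        Matrix.mulVec_mulVec, aux_dshift, hMP4, hfixsum c hc]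
    | succ t ih =>
      intro c hc
      obtain ⟨c', hc', heq⟩ := hCgood c hc
      have hApB : Ap * B = (Ap * A) * C := by rw [hBAC, Matrix.mul_assoc]
      have lhs1 : (∑ s0, ∑ b0, c s0 b0 • x s0 b0) ⬝ᵥ ((γ • (Ap * B)) ^ (t+1) *ᵥ (Ap *ᵥ br))
          = γ * ((∑ s0, ∑ b0, c' s0 b0 • x s0 b0) ⬝ᵥ ((γ • (Ap * B)) ^ t *ᵥ (Ap *ᵥ br))) := by
        rw [pow_succ', ← Matrix.mulVec_mulVec, smul_mulVec, dotProduct_smul, smul_eq_mul]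
        congr 1
        rw [hApB, ← Matrix.mulVec_mulVec, aux_dshift, hMP4, hfixsum c hc, aux_dshift, heq]
      have rhs1 : (∑ s0, ∑ b0, c s0 b0 • x s0 b0) ⬝ᵥ ((γ • C) ^ (t+1) *ᵥ y)
          = γ * ((∑ s0, ∑ b0, c' s0 b0 • x s0 b0) ⬝ᵥ ((γ • C) ^ t *ᵥ y)) := by
        rw [pow_succ', ← Matrix.mulVec_mulVec, smul_mulVec, dotProduct_smul, smul_eq_mul]
        congr 1
        rw [aux_dshift, heq]
      rw [lhs1, rhs1, ih c' hc']
  -- representation of x s a as a good combination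
  have hcx : ∀ s0 b0, ((if s0 = s then (1:ℝ) else 0) * (if b0 = a then 1 else 0)) ≠ 0 →
      0 < ρ s0 * π s0 b0 := by
    intro s0 b0 h
    by_cases h1 : s0 = s
    · by_cases h2 : b0 = a
      · subst h1; subst h2; exact hsupp
      · simp [h2] at h
    · simp [h1] at h
  have hxrep : ∑ s0, ∑ b0, ((if s0 = s then (1:ℝ) else 0) * (if b0 = a then 1 else 0)) • x s0 b0
      = x s a := by
    have hrow : ∀ s0, ∑ b0, ((if s0 = s then (1:ℝ) else 0) * (if b0 = a then 1 else 0)) • x s0 b0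
        = if s0 = s then x s0 a else 0 := by
      intro s0
      by_cases h1 : s0 = s
      · simp [h1, ite_smul, Finset.sum_ite_eq']
      · simp [h1]
    rw [Finset.sum_congr rfl fun s0 _ => hrow s0]
    simp [Finset.sum_ite_eq']
  obtain ⟨L, hL⟩ := aux_dotCLM (x s a)
  have h1 : x s a ⬝ᵥ ub = x s a ⬝ᵥ (∑' t : ℕ, (γ • C) ^ t *ᵥ y) := by
    calc x s a ⬝ᵥ ub = L ub := (hL ub).symm
      _ = ∑' t : ℕ, L ((γ • (Ap * B)) ^ t *ᵥ (Ap *ᵥ br)) := by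
          rw [hub]; exact L.map_tsum hsum1
      _ = ∑' t : ℕ, L ((γ • C) ^ t *ᵥ y) := by
          refine tsum_congr fun t => ?_
          rw [hL, hL, ← hxrep]
          exact hkey t _ hcx
      _ = L (∑' t : ℕ, (γ • C) ^ t *ᵥ y) := (L.map_tsum hsum2).symm
      _ = x s a ⬝ᵥ (∑' t : ℕ, (γ • C) ^ t *ᵥ y) := hL _
  -- Bellman equation for the series value
  have hSrec : (∑' t : ℕ, (γ • C) ^ t *ᵥ y) = y + (γ • C) *ᵥ (∑' t : ℕ, (γ • C) ^ t *ᵥ y) := by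
    obtain ⟨L2, hL2⟩ := aux_mulVecCLM (γ • C)
    have h0 : (∑' t : ℕ, (γ • C) ^ t *ᵥ y)
        = (γ • C) ^ 0 *ᵥ y + ∑' t : ℕ, (γ • C) ^ (t+1) *ᵥ y := Summable.tsum_eq_zero_add hsum2
    refine h0.trans ?_
    rw [pow_zero, Matrix.one_mulVec]
    congr 1
    calc ∑' t : ℕ, (γ • C) ^ (t+1) *ᵥ y = ∑' t : ℕ, L2 ((γ • C) ^ t *ᵥ y) := by
          refine tsum_congr fun t => ?_
          rw [hL2, Matrix.mulVec_mulVec, ← pow_succ']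
      _ = L2 (∑' t : ℕ, (γ • C) ^ t *ᵥ y) := (L2.map_tsum hsum2).symm
      _ = (γ • C) *ᵥ (∑' t : ℕ, (γ • C) ^ t *ᵥ y) := hL2 _
  have hqB : ∀ s0 a0, x s0 a0 ⬝ᵥ (∑' t : ℕ, (γ • C) ^ t *ᵥ y)
      = R s0 a0 + γ * ∑ s', P s0 a0 s' * ∑ b, π s' b * (x s' b ⬝ᵥ (∑' t : ℕ, (γ • C) ^ t *ᵥ y)) := by
    intro s0 a0
    conv_lhs => rw [hSrec]
    rw [dotProduct_add, hR]
    congr 1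
    rw [smul_mulVec, dotProduct_smul, smul_eq_mul]
    congr 1
    rw [aux_dshift, hCx, aux_sum_dot]
    refine Finset.sum_congr rfl fun s' _ => ?_
    rw [smul_dotProduct, smul_eq_mul]
    congr 1
    rw [aux_sum_dot]
    exact Finset.sum_congr rfl fun b _ => by rw [smul_dotProduct, smul_eq_mul]
  -- uniqueness of the Bellman fixed point
  have hQq : ∀ s0 a0, Q s0 a0 = x s0 a0 ⬝ᵥ (∑' t : ℕ, (γ • C) ^ t *ᵥ y) := by
    set q : S → Fin k → ℝ := fun s0 a0 => x s0 a0 ⬝ᵥ (∑' t : ℕ, (γ • C) ^ t *ᵥ y) with hq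
    have hDrec : ∀ s0 a0, Q s0 a0 - q s0 a0
        = γ * ∑ s', P s0 a0 s' * ∑ b, π s' b * (Q s' b - q s' b) := by
      intro s0 a0
      calc Q s0 a0 - q s0 a0
          = (R s0 a0 + γ * ∑ s', P s0 a0 s' * ∑ b, π s' b * Q s' b)
            - (R s0 a0 + γ * ∑ s', P s0 a0 s' * ∑ b, π s' b * q s' b) := by
            rw [← hQ s0 a0, ← hqB s0 a0]
        _ = γ * ((∑ s', P s0 a0 s' * ∑ b, π s' b * Q s' b)
            - (∑ s', P s0 a0 s' * ∑ b, π s' b * q s' b)) := by ring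
        _ = γ * ∑ s', P s0 a0 s' * ∑ b, π s' b * (Q s' b - q s' b) := by
            congr 1
            rw [← Finset.sum_sub_distrib]
            refine Finset.sum_congr rfl fun s' _ => ?_
            rw [← mul_sub, ← Finset.sum_sub_distrib]
            congr 1
            exact Finset.sum_congr rfl fun b _ => by ring
    have hne : (Finset.univ : Finset (S × Fin k)).Nonempty := ⟨(s, a), Finset.mem_univ _⟩
    set m := Finset.univ.sup' hne (fun p : S × Fin k => |Q p.1 p.2 - q p.1 p.2|) with hm
    have hmub : ∀ s0 a0, |Q s0 a0 - q s0 a0| ≤ m := fun s0 a0 =>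
      Finset.le_sup' (fun p : S × Fin k => |Q p.1 p.2 - q p.1 p.2|) (Finset.mem_univ (s0, a0))
    have hbound : ∀ s0 a0, |Q s0 a0 - q s0 a0| ≤ γ * m := by
      intro s0 a0
      rw [hDrec s0 a0, abs_mul, abs_of_pos hγ0]
      have hinner : ∀ s', |∑ b, π s' b * (Q s' b - q s' b)| ≤ m := by
        intro s'
        calc |∑ b, π s' b * (Q s' b - q s' b)| ≤ ∑ b, |π s' b * (Q s' b - q s' b)| :=
              Finset.abs_sum_le_sum_abs _ _
          _ ≤ ∑ b, π s' b * m := Finset.sum_le_sum fun b _ => by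
              rw [abs_mul, abs_of_nonneg ((hπ s').1 b)]
              exact mul_le_mul_of_nonneg_left (hmub s' b) ((hπ s').1 b)
          _ = m := by rw [← Finset.sum_mul, (hπ s').2, one_mul]
      have houter : |∑ s', P s0 a0 s' * ∑ b, π s' b * (Q s' b - q s' b)| ≤ m := by
        calc |∑ s', P s0 a0 s' * ∑ b, π s' b * (Q s' b - q s' b)|
            ≤ ∑ s', |P s0 a0 s' * ∑ b, π s' b * (Q s' b - q s' b)| :=
              Finset.abs_sum_le_sum_abs _ _
          _ ≤ ∑ s', P s0 a0 s' * m := Finset.sum_le_sum fun s' _ => by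
              rw [abs_mul, abs_of_nonneg ((hP s0 a0).1 s')]
              exact mul_le_mul_of_nonneg_left (hinner s') ((hP s0 a0).1 s')
          _ = m := by rw [← Finset.sum_mul, (hP s0 a0).2, one_mul]
      exact mul_le_mul_of_nonneg_left houter (le_of_lt hγ0)
    have hm0 : m ≤ 0 := by
      obtain ⟨p0, _, hp0⟩ := Finset.exists_mem_eq_sup' hne
        (fun p : S × Fin k => |Q p.1 p.2 - q p.1 p.2|)
      have hb := hbound p0.1 p0.2
      nlinarith [hp0, hb, hγ1, abs_nonneg (Q p0.1 p0.2 - q p0.1 p0.2)]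
    intro s0 a0
    have habs : |Q s0 a0 - q s0 a0| = 0 :=
      le_antisymm (le_trans (hmub s0 a0) hm0) (abs_nonneg _)
    exact sub_eq_zero.1 (abs_eq_zero.1 habs)
  refine ⟨h1, ?_⟩
  rw [h1]
  exact (hQq s a).symm
end

section
/- Deterministic bound on the first k TD iterates: with u_0 = 0, ‖ū‖ ≤ 2/(1-γ), updates u_{i+1} = u_i - η x_i(⟨x_i - γx_{i+1}, u_i⟩ - r_i) with ‖x_i‖, ‖x_{i+1}‖ ≤ 1, r_i ∈ [0,1], and step size η satisfying η(1+γ) ≤ 1/(200k), every iterate i ≤ k satisfies ‖u_i - ū‖ ≤ (1 + 1/(200k))^i · 2/(1-γ) + η ∑_{l<i} (1 + 1/(200k))^l · 4/(1-γ), and hence ‖u_i - ū‖ ≤ (4 + 8kη)/(1-γ). -/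
/-!
Each TD update moves `u` by at most `η ((1 + γ) ‖u‖ + 1)`, so the distance to `ū` grows by a
factor at most `1 + η (1 + γ) ≤ 1 + 1/(200k)` plus an additive `η · 4/(1-γ)` (using
`‖ū‖ ≤ 2/(1-γ)`). Unrolling this linear recursion gives the first bound, and
`(1 + 1/(200k))^i ≤ exp (1/200) ≤ 2` for `i ≤ k` gives the second.
-/

open scoped InnerProductSpace
open Finset

section TDStep

variable {E : Type*} [NormedAddCommGroup E] [InnerProductSpace ℝ E]

/-- The TD(0) update; `x` and `y` are the current and the next feature vector. -/
def tdStep (η γ : ℝ) (x y : E) (r : ℝ) (u : E) : E :=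
  u - η • ((⟪x - γ • y, u⟫_ℝ - r) • x)

lemma norm_sub_smul_le_one_add {γ : ℝ} {x y : E} (hγ : 0 ≤ γ) (hx : ‖x‖ ≤ 1) (hy : ‖y‖ ≤ 1) :
    ‖x - γ • y‖ ≤ 1 + γ :=
  calc ‖x - γ • y‖ ≤ ‖x‖ + γ * ‖y‖ := by
        simpa only [norm_smul, Real.norm_of_nonneg hγ] using norm_sub_le x (γ • y)
    _ ≤ 1 + γ := by nlinarith

lemma norm_tdStep_sub_self_le {η γ r : ℝ} {x y : E} (hη : 0 ≤ η) (hγ : 0 ≤ γ)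
    (hx : ‖x‖ ≤ 1) (hy : ‖y‖ ≤ 1) (hr : |r| ≤ 1) (u : E) :
    ‖tdStep η γ x y r u - u‖ ≤ η * ((1 + γ) * ‖u‖ + 1) := by
  have hinner : |⟪x - γ • y, u⟫_ℝ| ≤ (1 + γ) * ‖u‖ :=
    (abs_real_inner_le_norm _ _).trans <|
      mul_le_mul_of_nonneg_right (norm_sub_smul_le_one_add hγ hx hy) (norm_nonneg u)
  have hcoef : |⟪x - γ • y, u⟫_ℝ - r| ≤ (1 + γ) * ‖u‖ + 1 :=
    (abs_sub _ _).trans (add_le_add hinner hr)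
  rw [tdStep, sub_sub_cancel_left, norm_neg, norm_smul, norm_smul, Real.norm_of_nonneg hη,
    Real.norm_eq_abs]
  gcongr
  calc |⟪x - γ • y, u⟫_ℝ - r| * ‖x‖ ≤ ((1 + γ) * ‖u‖ + 1) * 1 :=
        mul_le_mul hcoef hx (norm_nonneg x) (by positivity)
    _ = (1 + γ) * ‖u‖ + 1 := mul_one _

lemma norm_tdStep_sub_le {η γ r : ℝ} {x y : E} (hη : 0 ≤ η) (hγ : 0 ≤ γ)
    (hx : ‖x‖ ≤ 1) (hy : ‖y‖ ≤ 1) (hr : |r| ≤ 1) (u v : E) :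
    ‖tdStep η γ x y r u - v‖ ≤ (1 + η * (1 + γ)) * ‖u - v‖ + η * ((1 + γ) * ‖v‖ + 1) := by
  have hu : ‖u‖ ≤ ‖u - v‖ + ‖v‖ := norm_le_norm_sub_add u v
  have hstep := norm_tdStep_sub_self_le hη hγ hx hy hr u
  calc ‖tdStep η γ x y r u - v‖ ≤ ‖tdStep η γ x y r u - u‖ + ‖u - v‖ :=
        norm_sub_le_norm_sub_add_norm_sub _ _ _
    _ ≤ (1 + η * (1 + γ)) * ‖u - v‖ + η * ((1 + γ) * ‖v‖ + 1) := by
      have : η * (1 + γ) * ‖u‖ ≤ η * (1 + γ) * (‖u - v‖ + ‖v‖) := by gcongr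
      nlinarith

lemma norm_tdStep_sub_le_of_norm_le {η γ r : ℝ} {x y u v : E} (hη : 0 ≤ η) (hγ0 : 0 ≤ γ)
    (hγ1 : γ < 1) (hx : ‖x‖ ≤ 1) (hy : ‖y‖ ≤ 1) (hr : |r| ≤ 1) (hv : ‖v‖ ≤ 2 / (1 - γ)) :
    ‖tdStep η γ x y r u - v‖ ≤ (1 + η * (1 + γ)) * ‖u - v‖ + η * (4 / (1 - γ)) := by
  have h1γ : 0 < 1 - γ := by linarith
  have hdrift : (1 + γ) * ‖v‖ + 1 ≤ 4 / (1 - γ) :=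
    calc (1 + γ) * ‖v‖ + 1 ≤ (1 + γ) * (2 / (1 - γ)) + 1 := by gcongr
      _ = (3 + γ) / (1 - γ) := by field_simp; ring
      _ ≤ 4 / (1 - γ) := by gcongr; linarith
  calc ‖tdStep η γ x y r u - v‖ ≤ (1 + η * (1 + γ)) * ‖u - v‖ + η * ((1 + γ) * ‖v‖ + 1) :=
        norm_tdStep_sub_le hη hγ0 hx hy hr u v
    _ ≤ (1 + η * (1 + γ)) * ‖u - v‖ + η * (4 / (1 - γ)) := by gcongr

end TDStep

lemma le_pow_mul_add_geom_sum {a : ℕ → ℝ} {c C D : ℝ} (hc : 0 ≤ c) (h0 : a 0 ≤ C)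
    (hstep : ∀ j, a (j + 1) ≤ c * a j + D) (j : ℕ) :
    a j ≤ c ^ j * C + ∑ l ∈ range j, c ^ l * D := by
  induction j with
  | zero => simpa using h0
  | succ j ih =>
    calc a (j + 1) ≤ c * a j + D := hstep j
      _ ≤ c * (c ^ j * C + ∑ l ∈ range j, c ^ l * D) + D := by gcongr
      _ = c ^ (j + 1) * C + ∑ l ∈ range (j + 1), c ^ l * D := by
        simp only [sum_range_succ', pow_succ', pow_zero, one_mul, mul_add, mul_sum, mul_assoc,
          add_assoc]

lemma one_add_one_div_pow_le_two {i k : ℕ} (hik : i ≤ k) :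
    (1 + 1 / (200 * k : ℝ)) ^ i ≤ 2 := by
  set ε : ℝ := 1 / (200 * k)
  have hε : 0 ≤ ε := by positivity
  have hiε : i * ε ≤ 1 / 200 := by
    rcases Nat.eq_zero_or_pos k with rfl | hk
    · simp [ε]
    · calc i * ε ≤ k * ε := by gcongr
        _ = 1 / 200 := by simp only [ε]; field_simp
  calc (1 + ε) ^ i ≤ Real.exp ε ^ i := by
        gcongr; linarith [Real.add_one_le_exp ε]
    _ = Real.exp (i * ε) := (Real.exp_nat_mul ε i).symm
    _ ≤ Real.exp (Real.log 2) := by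
        gcongr; linarith [Real.log_two_gt_d9]
    _ = 2 := Real.exp_log two_pos

lemma pow_mul_add_geom_sum_le {i k : ℕ} (hik : i ≤ k) {C D η : ℝ} (hC : 0 ≤ C) (hD : 0 ≤ D)
    (hη : 0 ≤ η) :
    (1 + 1 / (200 * k : ℝ)) ^ i * C + η * ∑ l ∈ range i, (1 + 1 / (200 * k : ℝ)) ^ l * D
      ≤ 2 * C + 2 * k * η * D := by
  have hsum : ∑ l ∈ range i, (1 + 1 / (200 * k : ℝ)) ^ l * D ≤ k * (2 * D) :=
    calc ∑ l ∈ range i, (1 + 1 / (200 * k : ℝ)) ^ l * D ≤ ∑ l ∈ range i, 2 * D := by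
          gcongr with l hl
          exact one_add_one_div_pow_le_two ((mem_range.mp hl).le.trans hik)
      _ ≤ k * (2 * D) := by
          rw [sum_const, card_range, nsmul_eq_mul]; gcongr
  calc (1 + 1 / (200 * k : ℝ)) ^ i * C + η * ∑ l ∈ range i, (1 + 1 / (200 * k : ℝ)) ^ l * D
      ≤ 2 * C + η * (k * (2 * D)) := by
        gcongr; exact one_add_one_div_pow_le_two hik
    _ = 2 * C + 2 * k * η * D := by ring

theorem stmt17_general {n : ℕ} (γ η : ℝ) (hγ0 : 0 < γ) (hγ1 : γ < 1) (hη : 0 < η)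
    (k : ℕ) (hηk : η * (1 + γ) ≤ 1 / (200 * k))
    (u x : ℕ → EuclideanSpace ℝ (Fin n)) (r : ℕ → ℝ)
    (hx : ∀ i, ‖x i‖ ≤ 1) (hr : ∀ i, 0 ≤ r i ∧ r i ≤ 1)
    (hu0 : u 0 = 0)
    (ub : EuclideanSpace ℝ (Fin n)) (hub : ‖ub‖ ≤ 2 / (1 - γ))
    (hupd : ∀ i, u (i + 1)
      = u i - η • ((⟪x i - γ • x (i + 1), u i⟫_ℝ - r i) • x i)) :
    ∀ i ≤ k,
      ‖u i - ub‖ ≤ (1 + 1 / (200 * k)) ^ i * (2 / (1 - γ))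
          + η * ∑ l ∈ Finset.range i, (1 + 1 / (200 * k)) ^ l * (4 / (1 - γ)) ∧
      ‖u i - ub‖ ≤ (4 + 8 * k * η) / (1 - γ) := by
  set ε : ℝ := 1 / (200 * k)
  have h1γ : 0 < 1 - γ := by linarith
  have hrec : ∀ j, ‖u (j + 1) - ub‖ ≤ (1 + ε) * ‖u j - ub‖ + η * (4 / (1 - γ)) := fun j =>
    calc ‖u (j + 1) - ub‖ ≤ (1 + η * (1 + γ)) * ‖u j - ub‖ + η * (4 / (1 - γ)) := by
          rw [hupd j]
          exact norm_tdStep_sub_le_of_norm_le hη.le hγ0.le hγ1 (hx j) (hx (j + 1))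
            (abs_le.mpr ⟨by linarith [(hr j).1], (hr j).2⟩) hub
      _ ≤ (1 + ε) * ‖u j - ub‖ + η * (4 / (1 - γ)) := by gcongr
  have hfirst : ∀ i, ‖u i - ub‖ ≤ (1 + ε) ^ i * (2 / (1 - γ))
      + η * ∑ l ∈ range i, (1 + ε) ^ l * (4 / (1 - γ)) := fun i => by
    have := le_pow_mul_add_geom_sum (a := fun j => ‖u j - ub‖) (by positivity)
      (by simpa [hu0] using hub) hrec i
    simpa only [mul_sum, mul_left_comm η] using this
  intro i hik
  refine ⟨hfirst i, (hfirst i).trans ?_⟩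
  calc (1 + ε) ^ i * (2 / (1 - γ)) + η * ∑ l ∈ range i, (1 + ε) ^ l * (4 / (1 - γ))
      ≤ 2 * (2 / (1 - γ)) + 2 * k * η * (4 / (1 - γ)) :=
        pow_mul_add_geom_sum_le hik (by positivity) (by positivity) hη.le
    _ = (4 + 8 * k * η) / (1 - γ) := by ring

/-- Deterministic bound on the first `k` TD iterates: with `u_0 = 0`,
`‖ū‖ ≤ 2/(1-γ)`, TD updates with features of norm at most `1`, rewards in `[0,1]`,
and step size `η(1+γ) ≤ 1/(200k)`, every `i ≤ k` satisfies
`‖u_i - ū‖ ≤ (1 + 1/(200k))^i · 2/(1-γ) + η ∑_{l<i} (1 + 1/(200k))^l · 4/(1-γ)`,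
and hence `‖u_i - ū‖ ≤ (4 + 8kη)/(1-γ)`. -/
theorem stmt17 {n : ℕ} (γ η : ℝ) (hγ0 : 0 < γ) (hγ1 : γ < 1) (hη : 0 < η)
    (k : ℕ) (hk : 1 ≤ k) (hηk : η * (1 + γ) ≤ 1 / (200 * k))
    (u x : ℕ → EuclideanSpace ℝ (Fin n)) (r : ℕ → ℝ)
    (hx : ∀ i, ‖x i‖ ≤ 1) (hr : ∀ i, 0 ≤ r i ∧ r i ≤ 1)
    (hu0 : u 0 = 0)
    (ub : EuclideanSpace ℝ (Fin n)) (hub : ‖ub‖ ≤ 2 / (1 - γ))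
    (hupd : ∀ i, u (i + 1)
      = u i - η • ((⟪x i - γ • x (i + 1), u i⟫_ℝ - r i) • x i)) :
    ∀ i ≤ k,
      ‖u i - ub‖ ≤ (1 + 1 / (200 * k)) ^ i * (2 / (1 - γ))
          + η * ∑ l ∈ Finset.range i, (1 + 1 / (200 * k)) ^ l * (4 / (1 - γ)) ∧
      ‖u i - ub‖ ≤ (4 + 8 * k * η) / (1 - γ) :=
  stmt17_general γ η hγ0 hγ1 hη k hηk u x r hx hr hu0 ub hub hupd
end

section
/- Stationarity contraction inequality for TD: let x, x' be random vectors with the same marginal distribution, γ ∈ (0,1), and ū, u ∈ ℝ^n. Then E[⟨x, u - ū⟩⟨x - γx', u - ū⟩] ≥ (1-γ) E[⟨x, u - ū⟩²]. -/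
open scoped InnerProductSpace
open MeasureTheory ProbabilityTheory

/-! Write `a = ⟪x, u - ū⟫` and `b = ⟪x', u - ū⟫`, so that the expectation to be
bounded is `E[a²] - γ E[ab]`. Integrating `2ab ≤ a² + b²` gives `E[ab] ≤ (E[a²] + E[b²]) / 2`, and
`E[b²] = E[a²]` because `x` and `x'` have the same law; hence `E[ab] ≤ E[a²]`, and `γ ≥ 0`
finishes the proof. -/

section

variable {Ω : Type*} [MeasurableSpace Ω] {μ : Measure Ω} {a b : Ω → ℝ}

lemma integral_mul_le_half_integral_sq_add (hab : Integrable (fun ω => a ω * b ω) μ)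
    (ha : Integrable (fun ω => a ω ^ 2) μ) (hb : Integrable (fun ω => b ω ^ 2) μ) :
    ∫ ω, a ω * b ω ∂μ ≤ (∫ ω, a ω ^ 2 ∂μ + ∫ ω, b ω ^ 2 ∂μ) / 2 := by
  rw [← integral_add ha hb, ← integral_div]
  refine integral_mono hab ((ha.add hb).div_const 2) fun ω => ?_
  linarith [two_mul_le_add_sq (a ω) (b ω)]

lemma one_sub_mul_integral_sq_le_integral_sq_sub_mul {γ : ℝ} (hγ : 0 ≤ γ)
    (hab : Integrable (fun ω => a ω * b ω) μ) (ha : Integrable (fun ω => a ω ^ 2) μ)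
    (hb : Integrable (fun ω => b ω ^ 2) μ) (hsq : ∫ ω, b ω ^ 2 ∂μ = ∫ ω, a ω ^ 2 ∂μ) :
    (1 - γ) * ∫ ω, a ω ^ 2 ∂μ ≤ ∫ ω, a ω ^ 2 - γ * (a ω * b ω) ∂μ := by
  have hmul : ∫ ω, a ω * b ω ∂μ ≤ ∫ ω, a ω ^ 2 ∂μ := by
    simpa [hsq] using integral_mul_le_half_integral_sq_add hab ha hb
  rw [integral_sub ha (hab.const_mul γ), integral_const_mul]
  nlinarith

end

lemma real_inner_mul_inner_sub_smul {E : Type*} [NormedAddCommGroup E] [InnerProductSpace ℝ E]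
    (x x' v : E) (γ : ℝ) :
    ⟪x, v⟫_ℝ * ⟪x - γ • x', v⟫_ℝ = ⟪x, v⟫_ℝ ^ 2 - γ * (⟪x, v⟫_ℝ * ⟪x', v⟫_ℝ) := by
  rw [inner_sub_left, real_inner_smul_left]
  ring

theorem stmt18_general {n : ℕ} {Ω : Type*} [MeasurableSpace Ω] (μ : Measure Ω)
    (X X' : Ω → EuclideanSpace ℝ (Fin n))
    (hX : AEMeasurable X μ) (hX' : AEMeasurable X' μ)
    (hsame : μ.map X = μ.map X')
    (γ : ℝ) (hγ0 : 0 < γ)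
    (u ub : EuclideanSpace ℝ (Fin n))
    (hint1 : Integrable (fun ω => ⟪X ω, u - ub⟫_ℝ ^ 2) μ)
    (hint2 : Integrable (fun ω => ⟪X' ω, u - ub⟫_ℝ ^ 2) μ)
    (hint3 : Integrable (fun ω => ⟪X ω, u - ub⟫_ℝ * ⟪X' ω, u - ub⟫_ℝ) μ) :
    (1 - γ) * ∫ ω, ⟪X ω, u - ub⟫_ℝ ^ 2 ∂μ
      ≤ ∫ ω, ⟪X ω, u - ub⟫_ℝ * ⟪X ω - γ • X' ω, u - ub⟫_ℝ ∂μ := by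
  have hident : IdentDistrib X X' μ μ := ⟨hX, hX', hsame⟩
  have hsq : ∫ ω, ⟪X' ω, u - ub⟫_ℝ ^ 2 ∂μ = ∫ ω, ⟪X ω, u - ub⟫_ℝ ^ 2 ∂μ :=
    (hident.comp (u := fun y => ⟪y, u - ub⟫_ℝ ^ 2) (by fun_prop)).integral_eq.symm
  simp_rw [real_inner_mul_inner_sub_smul]
  exact one_sub_mul_integral_sq_le_integral_sq_sub_mul hγ0.le hint3 hint1 hint2 hsq

/-- Stationarity contraction inequality for TD: if `x, x'` are random vectors with
the same marginal distribution and `γ ∈ (0,1)`, then for any `u, ū`,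
`E[⟨x, u - ū⟩ ⟨x - γx', u - ū⟩] ≥ (1-γ) E[⟨x, u - ū⟩²]`. -/
theorem stmt18 {n : ℕ} {Ω : Type*} [MeasurableSpace Ω] (μ : Measure Ω)
    [IsProbabilityMeasure μ]
    (X X' : Ω → EuclideanSpace ℝ (Fin n))
    (hX : AEMeasurable X μ) (hX' : AEMeasurable X' μ)
    (hsame : μ.map X = μ.map X')
    (γ : ℝ) (hγ0 : 0 < γ) (hγ1 : γ < 1)
    (u ub : EuclideanSpace ℝ (Fin n))
    (hint1 : Integrable (fun ω => ⟪X ω, u - ub⟫_ℝ ^ 2) μ)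
    (hint2 : Integrable (fun ω => ⟪X' ω, u - ub⟫_ℝ ^ 2) μ)
    (hint3 : Integrable (fun ω => ⟪X ω, u - ub⟫_ℝ * ⟪X' ω, u - ub⟫_ℝ) μ) :
    (1 - γ) * ∫ ω, ⟪X ω, u - ub⟫_ℝ ^ 2 ∂μ
      ≤ ∫ ω, ⟪X ω, u - ub⟫_ℝ * ⟪X ω - γ • X' ω, u - ub⟫_ℝ ∂μ :=
  stmt18_general μ X X' hX hX' hsame γ hγ0 u ub hint1 hint2 hint3
end
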